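/- arXiv:1908.03788 — 3 statements merged into one kernel-verified Lean document; each statement's English description precedes it below -/
import Mathlib

section
/- Every finite graph with at least one edge has an avoidable edge. -/
variable {V : Type*}

/-- `p` is an induced path on `k` vertices in `G`: injective, and adjacency holds
exactly between consecutive vertices. -/
def IsInducedPathOn (G : SimpleGraph V) (k : ℕ) (p : Fin k → V) : Prop :=
  Function.Injective p ∧
    ∀ i j : Fin k, G.Adj (p i) (p j) ↔ (i.val + 1 = j.val ∨ j.val + 1 = i.val)

/-- `c` is an induced cycle on `n ≥ 3` vertices in `G`: injective, and adjacency holds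
exactly between cyclically consecutive vertices. -/
def IsInducedCycleOn (G : SimpleGraph V) (n : ℕ) (c : Fin n → V) : Prop :=
  3 ≤ n ∧ Function.Injective c ∧
    ∀ i j : Fin n, G.Adj (c i) (c j) ↔ ((i.val + 1) % n = j.val ∨ (j.val + 1) % n = i.val)

/-- The vertices of `q` all lie on some induced cycle of `G`. -/
def InInducedCycle (G : SimpleGraph V) {m : ℕ} (q : Fin m → V) : Prop :=
  ∃ (n : ℕ) (c : Fin n → V), IsInducedCycleOn G n c ∧ Set.range q ⊆ Set.range c

/-- `q` is an extension of the induced path `p`: an induced path on `k+2` vertices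
whose middle `k` vertices are `p` (one new vertex at each end). -/
def IsExtension (G : SimpleGraph V) {k : ℕ} (p : Fin k → V) (q : Fin (k + 2) → V) : Prop :=
  IsInducedPathOn G (k + 2) q ∧ ∀ i : Fin k, q i.succ.castSucc = p i

/-- `p` is an avoidable path in `G`: an induced path each of whose extensions lies on an
induced cycle of `G`. -/
def IsAvoidable (G : SimpleGraph V) {k : ℕ} (p : Fin k → V) : Prop :=
  IsInducedPathOn G k p ∧
    ∀ q : Fin (k + 2) → V, IsExtension G p q → InInducedCycle G q

/-- `v` is an avoidable vertex: every induced path `x–v–y` lies on an induced cycle. -/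
def AvoidableVertex (G : SimpleGraph V) (v : V) : Prop :=
  ∀ x y : V, G.Adj x v → G.Adj v y → x ≠ y → ¬ G.Adj x y → InInducedCycle G ![x, v, y]

/-- `v` lies outside the closed neighbourhood of `w`. -/
def OutsideClosedNbhd (G : SimpleGraph V) (w v : V) : Prop :=
  v ≠ w ∧ ¬ G.Adj w v

/-- Property `H_R(G,k,w)`: either `G − N[w]` has no induced path on `k` vertices,
or there is an induced path on `k` vertices inside `G − N[w]` avoidable in `G`. -/
def HR (G : SimpleGraph V) (k : ℕ) (w : V) : Prop :=
  (¬ ∃ p : Fin k → V, IsInducedPathOn G k p ∧ ∀ i, OutsideClosedNbhd G w (p i)) ∨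
  (∃ p : Fin k → V, IsInducedPathOn G k p ∧ (∀ i, OutsideClosedNbhd G w (p i)) ∧
    ∀ q : Fin (k + 2) → V, IsExtension G p q → InInducedCycle G q)

/-- The graph obtained from `G` by merging adjacent vertices `u₁, u₂` into one vertex
(represented by `u₁`, with `u₂` becoming an isolated stray vertex). -/
def mergeGraph (G : SimpleGraph V) (u₁ u₂ : V) : SimpleGraph V where
  Adj a b := a ≠ b ∧ a ≠ u₂ ∧ b ≠ u₂ ∧
    (G.Adj a b ∨ (a = u₁ ∧ G.Adj u₂ b) ∨ (b = u₁ ∧ G.Adj a u₂))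
  symm := by
    constructor
    rintro a b ⟨h1, h2, h3, h4⟩
    refine ⟨h1.symm, h3, h2, ?_⟩
    rcases h4 with h | ⟨ha, h⟩ | ⟨hb, h⟩
    · exact Or.inl h.symm
    · exact Or.inr (Or.inr ⟨ha, h.symm⟩)
    · exact Or.inr (Or.inl ⟨hb, h.symm⟩)
  loopless := ⟨fun a h => h.1 rfl⟩

/-- `G` is chordal: every induced cycle has exactly three vertices. -/
def Chordal (G : SimpleGraph V) : Prop :=
  ∀ (n : ℕ) (c : Fin n → V), IsInducedCycleOn G n c → n = 3

/-- `v` is a simplicial vertex: its neighbourhood is a clique. -/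
def SimplicialVertex (G : SimpleGraph V) (v : V) : Prop :=
  ∀ x y : V, G.Adj v x → G.Adj v y → x ≠ y → G.Adj x y

/-- An edge `uv` is avoidable if every induced `P₄` with middle edge `uv` lies on an
induced cycle. -/
def AvoidableEdge (G : SimpleGraph V) (u v : V) : Prop :=
  G.Adj u v ∧ ∀ x y : V, IsInducedPathOn G 4 ![x, u, v, y] → InInducedCycle G ![x, u, v, y]

/-!
Prove a rooted version: if `W` is nonempty and induces a connected subgraph, and some edge
avoids the closed neighbourhood `N[W]`, then `G` has an avoidable edge. While some neighbour
`s` of `W` misses both ends of an edge outside `N[W]`, replace `W` by `W ∪ {s}`. Otherwise every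
neighbour of `W` dominates the edges of `G - N[W]`, and by induction on the number of vertices
`G - N[W]` has an avoidable edge `pq`. It stays avoidable in `G`: in an induced `P₄` `x p q y`
with an end in `N(W)`, domination produces a chord unless both ends lie in `N(W)`, and then a
shortest `x`–`y` path through `W` closes an induced cycle. For the unrooted claim, an edge `uv`
that is not avoidable lies on an induced `P₄` `x u v y`, and `xu` avoids `N[y]`.
-/

namespace SimpleGraph

variable {G : SimpleGraph V} {u v : V}

lemma Walk.sub_le_dist_getVert (p : G.Walk u v) (hp : p.length = G.dist u v) {i j : ℕ}
    (hj : j ≤ p.length) : j - i ≤ G.dist (p.getVert i) (p.getVert j) := by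
  have hr : G.Reachable (p.getVert i) (p.getVert j) := ⟨(p.take i).reverse.append (p.take j)⟩
  obtain ⟨q, hq⟩ := hr.exists_walk_length_eq_dist
  have := G.dist_le ((p.take i).append (q.append (p.drop j)))
  simp only [Walk.length_append, Walk.take_length, Walk.drop_length] at this
  omega

lemma Walk.isInducedPathOn_getVert (p : G.Walk u v) (hp : p.length = G.dist u v) :
    IsInducedPathOn G (p.length + 1) (fun i => p.getVert i) := by
  have hdist (i j : Fin (p.length + 1)) := p.sub_le_dist_getVert hp (i := i) (j := j) (by omega)
  refine ⟨fun i j hij => ?_, fun i j => ⟨fun hadj => ?_, ?_⟩⟩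
  · have h₁ := hdist i j
    have h₂ := hdist j i
    simp only [hij, dist_self] at h₁ h₂
    omega
  · have h₁ := hdist i j
    have h₂ := hdist j i
    rw [dist_eq_one_iff_adj.mpr hadj] at h₁
    rw [dist_comm, dist_eq_one_iff_adj.mpr hadj] at h₂
    have hne : (i : ℕ) ≠ j := fun h => hadj.ne (by rw [Fin.ext h])
    omega
  · rintro (h | h)
    · simpa [← h] using p.adj_getVert_succ (i := i) (by omega)
    · simpa [← h] using (p.adj_getVert_succ (i := j) (by omega)).symm

lemma Reachable.exists_isInducedPathOn (h : G.Reachable u v) :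
    ∃ (m : ℕ) (f : Fin (m + 1) → V), IsInducedPathOn G (m + 1) f ∧ f 0 = u ∧
      f (Fin.last m) = v := by
  obtain ⟨p, hp⟩ := h.exists_walk_length_eq_dist
  exact ⟨p.length, _, p.isInducedPathOn_getVert hp, p.getVert_zero, p.getVert_length⟩

end SimpleGraph

section InducedPaths

variable {G : SimpleGraph V}

lemma isInducedPathOn_induce_iff {s : Set V} {k : ℕ} {f : Fin k → s} :
    IsInducedPathOn (G.induce s) k f ↔ IsInducedPathOn G k (fun i => (f i : V)) :=
  ⟨fun ⟨hinj, hadj⟩ => ⟨Subtype.val_injective.comp hinj, hadj⟩,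
    fun ⟨hinj, hadj⟩ => ⟨hinj.of_comp, hadj⟩⟩

lemma InInducedCycle.of_induce {s : Set V} {m : ℕ} {q : Fin m → s}
    (h : InInducedCycle (G.induce s) q) : InInducedCycle G (fun i => (q i : V)) := by
  obtain ⟨n, c, ⟨hn, hinj, hadj⟩, hq⟩ := h
  refine ⟨n, fun i => c i, ⟨hn, Subtype.val_injective.comp hinj, hadj⟩, ?_⟩
  rintro _ ⟨i, rfl⟩
  obtain ⟨j, hj⟩ := hq ⟨i, rfl⟩
  exact ⟨j, congrArg Subtype.val hj⟩

lemma isInducedPathOn_four_iff {a b c d : V} :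
    IsInducedPathOn G 4 ![a, b, c, d] ↔ G.Adj a b ∧ G.Adj b c ∧ G.Adj c d ∧
      ¬ G.Adj a c ∧ ¬ G.Adj b d ∧ ¬ G.Adj a d ∧ a ≠ d := by
  constructor
  · rintro ⟨hinj, hadj⟩
    refine ⟨(hadj 0 1).2 (by decide), (hadj 1 2).2 (by decide), (hadj 2 3).2 (by decide),
      fun h => by simpa using (hadj 0 2).1 h, fun h => by simpa using (hadj 1 3).1 h,
      fun h => by simpa using (hadj 0 3).1 h,
      fun h => by simpa using hinj (a₁ := 0) (a₂ := 3) h⟩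
  · rintro ⟨hab, hbc, hcd, hac, hbd, had, hne⟩
    refine ⟨fun i j hij => ?_, fun i j => ?_⟩
    · fin_cases i <;> fin_cases j <;> simp_all [G.ne_of_adj]
    · fin_cases i <;> fin_cases j <;> simp_all [G.adj_comm]

lemma IsInducedPathOn.snoc {n : ℕ} {f : Fin n → V} {v : V} (hf : IsInducedPathOn G n f)
    (hv : v ∉ Set.range f) (hadj : ∀ i, G.Adj (f i) v ↔ i.val + 1 = n) :
    IsInducedPathOn G (n + 1) (Fin.snoc f v) := by
  refine ⟨fun i j hij => ?_, fun i j => ?_⟩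
  · induction i using Fin.lastCases <;> induction j using Fin.lastCases <;>
      simp_all [hf.1.eq_iff]
  · induction i using Fin.lastCases <;> induction j using Fin.lastCases <;>
      simp_all [hf.2, G.adj_comm v] <;> omega

lemma IsInducedPathOn.isInducedCycleOn_cons {k : ℕ} {f : Fin (k + 1) → V} {v : V}
    (hf : IsInducedPathOn G (k + 1) f) (hk : 1 ≤ k) (hv : v ∉ Set.range f)
    (hadj : ∀ i, G.Adj v (f i) ↔ i = 0 ∨ i = Fin.last k) :
    IsInducedCycleOn G (k + 2) (Fin.cons v f) := by
  refine ⟨by omega, fun i j hij => ?_, fun i j => ?_⟩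
  · induction i using Fin.cases <;> induction j using Fin.cases <;>
      simp_all [hf.1.eq_iff]
  · have hmod (i : Fin (k + 2)) :
        (i.val + 1) % (k + 2) = if i.val = k + 1 then 0 else i.val + 1 := by
      split_ifs with h
      · rw [h, Nat.mod_self]
      · exact Nat.mod_eq_of_lt (by omega)
    rw [hmod, hmod]
    induction i using Fin.cases <;> induction j using Fin.cases <;>
      simp only [Fin.cons_zero, Fin.cons_succ, Fin.val_zero, Fin.val_succ]
    · simp
    all_goals
      simp only [hadj, G.adj_comm _ v, hf.2, Fin.ext_iff, Fin.val_zero, Fin.val_last]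
      grind

lemma IsInducedPathOn.inInducedCycle_of_adj {m : ℕ} {g : Fin (m + 1) → V}
    (hg : IsInducedPathOn G (m + 1) g) {p q : V} (hpq : G.Adj p q)
    (hp : p ∉ Set.range g) (hq : q ∉ Set.range g) (hpg : ∀ i, G.Adj p (g i) ↔ i = 0)
    (hqg : ∀ i, G.Adj q (g i) ↔ i = Fin.last m) :
    InInducedCycle G ![g 0, p, q, g (Fin.last m)] := by
  have hpath : IsInducedPathOn G (m + 2) (Fin.snoc g q) :=
    hg.snoc hq fun i => by rw [G.adj_comm, hqg, Fin.ext_iff, Fin.val_last]; omega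
  have hcycle := hpath.isInducedCycleOn_cons le_add_self (v := p) (by
      rintro ⟨i, hi⟩
      induction i using Fin.lastCases <;> simp_all) (fun i => by
      induction i using Fin.lastCases with
      | last => simp [hpq]
      | cast i =>
        rw [Fin.snoc_castSucc, hpg, Fin.castSucc_eq_zero_iff]
        simp [Fin.castSucc_ne_last])
  refine ⟨_, _, hcycle, ?_⟩
  rintro _ ⟨i, rfl⟩
  fin_cases i
  · exact ⟨(0 : Fin (m + 1)).castSucc.succ, by simp⟩
  · exact ⟨0, by simp⟩
  · exact ⟨(Fin.last (m + 1)).succ, by simp⟩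
  · exact ⟨(Fin.last m).castSucc.succ, by simp⟩

end InducedPaths

section Exterior

variable {G : SimpleGraph V} {W : Set V}

def exterior (G : SimpleGraph V) (W : Set V) : Set V :=
  {v | ∀ w ∈ W, OutsideClosedNbhd G w v}

def DominatesExteriorEdges (G : SimpleGraph V) (W : Set V) : Prop :=
  ∀ s ∉ W, (∃ w ∈ W, G.Adj w s) → ∀ a ∈ exterior G W, ∀ b ∈ exterior G W,
    G.Adj a b → G.Adj s a ∨ G.Adj s b

lemma notMem_of_adj_mem_exterior {x p : V} (hp : p ∈ exterior G W) (hxp : G.Adj x p) :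
    x ∉ W :=
  fun hx => (hp x hx).2 hxp

lemma exists_adj_of_adj_mem_exterior {x p : V} (hp : p ∈ exterior G W) (hxp : G.Adj x p)
    (hx : x ∉ exterior G W) : ∃ w ∈ W, G.Adj w x := by
  by_contra! h
  exact hx fun w hw => ⟨fun hxw => notMem_of_adj_mem_exterior hp hxp (hxw ▸ hw), h w hw⟩

lemma exists_isInducedPathOn_through (hW : (G.induce W).Preconnected) {x y : V}
    (hx : ∃ w ∈ W, G.Adj w x) (hy : ∃ w ∈ W, G.Adj w y) :
    ∃ (m : ℕ) (g : Fin (m + 1) → V), IsInducedPathOn G (m + 1) g ∧ g 0 = x ∧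
      g (Fin.last m) = y ∧ ∀ i, i = 0 ∨ i = Fin.last m ∨ g i ∈ W := by
  obtain ⟨wx, hwx, hwxx⟩ := hx
  obtain ⟨wy, hwy, hwyy⟩ := hy
  set S : Set V := {x} ∪ W ∪ {y}
  have hS : (G.induce S).Connected :=
    SimpleGraph.connected_induce_union (t := {y})
      (SimpleGraph.connected_induce_union (s := {x}) .of_subsingleton hW rfl hwx
        hwxx.symm).preconnected
      .of_subsingleton (Or.inr hwy) rfl hwyy
  obtain ⟨m, f, hf, hf0, hfm⟩ :=
    (hS.preconnected ⟨x, by simp [S]⟩ ⟨y, by simp [S]⟩).exists_isInducedPathOn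
  have hg := isInducedPathOn_induce_iff.1 hf
  refine ⟨m, _, hg, congr($hf0.1), congr($hfm.1), fun i => ?_⟩
  rcases (f i).2 with (h | h) | h
  · exact Or.inl (hg.1 (h.trans congr($hf0.1).symm))
  · exact Or.inr (Or.inr h)
  · exact Or.inr (Or.inl (hg.1 (h.trans congr($hfm.1).symm)))

lemma inInducedCycle_of_ends_adj_preconnected (hW : (G.induce W).Preconnected) {x p q y : V}
    (hP : IsInducedPathOn G 4 ![x, p, q, y]) (hp : p ∈ exterior G W) (hq : q ∈ exterior G W)
    (hx : ∃ w ∈ W, G.Adj w x) (hy : ∃ w ∈ W, G.Adj w y) :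
    InInducedCycle G ![x, p, q, y] := by
  obtain ⟨hxp, hpq, hqy, hxq, hpy, hxy, -⟩ := isInducedPathOn_four_iff.1 hP
  obtain ⟨m, g, hg, hg0, hgm, hgW⟩ := exists_isInducedPathOn_through hW hx hy
  have hout (z : V) (hz : z ∈ exterior G W) (i : Fin (m + 1)) (hi : g i ∈ W) :
      g i ≠ z ∧ ¬ G.Adj z (g i) :=
    ⟨(hz _ hi).1.symm, fun h => (hz _ hi).2 h.symm⟩
  have hcycle := hg.inInducedCycle_of_adj hpq ?_ ?_ ?_ ?_
  · rwa [hg0, hgm] at hcycle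
  · rintro ⟨i, hi⟩
    rcases hgW i with rfl | rfl | h
    · exact hxp.ne (hg0.symm.trans hi)
    · exact hxy (hgm.symm.trans hi ▸ hxp)
    · exact (hout p hp i h).1 hi
  · rintro ⟨i, hi⟩
    rcases hgW i with rfl | rfl | h
    · exact hxy (hg0.symm.trans hi ▸ hqy)
    · exact hqy.ne (hgm.symm.trans hi).symm
    · exact (hout q hq i h).1 hi
  · intro i
    refine ⟨fun h => ?_, fun h => h ▸ hg0 ▸ hxp.symm⟩
    rcases hgW i with rfl | rfl | hi
    · rfl
    · exact absurd (hgm ▸ h) hpy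
    · exact absurd h (hout p hp i hi).2
  · intro i
    refine ⟨fun h => ?_, fun h => h ▸ hgm ▸ hqy⟩
    rcases hgW i with rfl | rfl | hi
    · exact absurd (hg0 ▸ h) (fun h' => hxq h'.symm)
    · rfl
    · exact absurd h (hout q hq i hi).2

lemma AvoidableEdge.of_induce_exterior (hW : (G.induce W).Preconnected)
    (hdom : DominatesExteriorEdges G W) {p q : exterior G W}
    (h : AvoidableEdge (G.induce (exterior G W)) p q) : AvoidableEdge G p q := by
  refine ⟨h.1, fun x y hP => ?_⟩
  obtain ⟨hxp, hpq, hqy, hxq, hpy, hxy, hne⟩ := isInducedPathOn_four_iff.1 hP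
  by_cases hx : x ∈ exterior G W <;> by_cases hy : y ∈ exterior G W
  · have hP' : IsInducedPathOn (G.induce (exterior G W)) 4 ![⟨x, hx⟩, p, q, ⟨y, hy⟩] :=
      isInducedPathOn_four_iff.2 ⟨hxp, hpq, hqy, hxq, hpy, hxy, fun h => hne congr($h.1)⟩
    convert (h.2 _ _ hP').of_induce using 1
    funext i
    fin_cases i <;> rfl
  · exfalso
    exact (hdom y (notMem_of_adj_mem_exterior q.2 hqy.symm)
      (exists_adj_of_adj_mem_exterior q.2 hqy.symm hy) x hx p p.2 hxp).elim
      (fun h => hxy h.symm) (fun h => hpy h.symm)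
  · exfalso
    exact (hdom x (notMem_of_adj_mem_exterior p.2 hxp)
      (exists_adj_of_adj_mem_exterior p.2 hxp hx) q q.2 y hy hqy).elim hxq hxy
  · exact inInducedCycle_of_ends_adj_preconnected hW hP p.2 q.2
      (exists_adj_of_adj_mem_exterior p.2 hxp hx) (exists_adj_of_adj_mem_exterior q.2 hqy.symm hy)

end Exterior

universe u

lemma exists_avoidableEdge_of_adj_exterior {V : Type u} [Finite V] {G : SimpleGraph V}
    (ih : ∀ (V' : Type u) [Finite V'], Nat.card V' < Nat.card V →
      ∀ (H : SimpleGraph V') (a b : V'), H.Adj a b → ∃ u v, AvoidableEdge H u v)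
    {W : Set V} (hWne : W.Nonempty) (hW : (G.induce W).Preconnected) {a b : V}
    (ha : a ∈ exterior G W) (hb : b ∈ exterior G W) (hab : G.Adj a b) :
    ∃ u v, AvoidableEdge G u v := by
  induction W using WellFoundedGT.induction generalizing a b with
  | _ W ihW =>
  by_cases hdom : DominatesExteriorEdges G W
  · obtain ⟨w, hw⟩ := hWne
    have hcard : Nat.card (exterior G W) < Nat.card V :=
      Finite.card_subtype_lt (x := w) fun h => (h w hw).1 rfl
    obtain ⟨u, v, huv⟩ := ih _ hcard (G.induce (exterior G W)) ⟨a, ha⟩ ⟨b, hb⟩ hab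
    exact ⟨u, v, huv.of_induce_exterior hW hdom⟩
  · simp only [DominatesExteriorEdges, not_forall, not_or] at hdom
    obtain ⟨s, hsW, ⟨w, hw, hws⟩, a', ha', b', hb', hab', hsa', hsb'⟩ := hdom
    have hext (c : V) (hc : c ∈ exterior G W) (hsc : ¬ G.Adj s c) :
        c ∈ exterior G (W ∪ {s}) := by
      rintro z (hz | rfl)
      · exact hc z hz
      · exact ⟨fun h => (hc w hw).2 (h ▸ hws), hsc⟩
    refine ihW (W ∪ {s}) ?_ ⟨w, Or.inl hw⟩
      (SimpleGraph.connected_induce_union (t := {s}) hW .of_subsingleton hw rfl hws).preconnected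
      (hext a' ha' hsa') (hext b' hb' hsb') hab'
    rw [Set.union_singleton]
    exact Set.ssubset_insert hsW

theorem exists_avoidableEdge_of_adj {V : Type u} [Finite V] (G : SimpleGraph V) {u v : V}
    (huv : G.Adj u v) : ∃ a b, AvoidableEdge G a b := by
  induction hn : Nat.card V using Nat.strong_induction_on generalizing V with
  | _ n ih =>
  by_cases havoid : AvoidableEdge G u v
  · exact ⟨u, v, havoid⟩
  obtain ⟨x, y, hP, -⟩ : ∃ x y, IsInducedPathOn G 4 ![x, u, v, y] ∧
      ¬ InInducedCycle G ![x, u, v, y] := by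
    simpa [AvoidableEdge, huv] using havoid
  obtain ⟨hxu, -, -, -, huy, hxy, hne⟩ := isInducedPathOn_four_iff.1 hP
  refine exists_avoidableEdge_of_adj_exterior
    (fun V' _ hV' H a b hab => ih _ (hn ▸ hV') H hab rfl)
    (Set.singleton_nonempty y) .of_subsingleton (a := x) (b := u) ?_ ?_ hxu
  · rintro _ rfl
    exact ⟨hne, fun h => hxy h.symm⟩
  · rintro _ rfl
    exact ⟨fun h => hxy (h ▸ hxu), fun h => huy h.symm⟩

/-- Every finite graph with at least one edge has an avoidable edge. -/
theorem stmt1 [Fintype V] (G : SimpleGraph V) (h : ∃ u v : V, G.Adj u v) :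
    ∃ u v : V, AvoidableEdge G u v := by
  obtain ⟨u, v, huv⟩ := h
  exact exists_avoidableEdge_of_adj G huv
end

section
/- For every positive integer k, every finite graph G, and every subset X ⊆ V(G) such that G[X] is connected, either G − N[X] contains no induced path on k vertices, or there exists an induced path on k vertices with all vertices in G − N[X] that is avoidable in G. -/
variable {V : Type*}

/-! Induction on the number of vertices, proving along the way that every graph with an induced
`P_k` has an avoidable one. Write `N(X) = N[X] \ X`. For connected `X`, enlarge `X` by a vertex
`u ∈ N(X)` as long as `G − N[X ∪ {u}]` still contains an induced `P_k`. Once this is impossible,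
every vertex of `N(X)` has a neighbour on every induced `P_k` of `G − N[X]`; take `P` avoidable
in the smaller graph `G − N[X]`. An extension `x–P–y` inside `G − N[X]` lies on an induced cycle
by the choice of `P`. It cannot have exactly one end, say `y`, in `N(X)`: `y` has no neighbour
on the `P_k` formed by `x` and `P` minus its last vertex. If both ends are in `N(X)`, a shortest
`x`–`y` path through `X` closes it into an induced cycle. The statement for graphs follows from
the one for `X` a single vertex, unless every vertex meets every induced `P_k`; then no induced
`P_k` has an extension at all. -/

open SimpleGraph

def closedNbhdCompl (G : SimpleGraph V) (X : Set V) : Set V :=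
  {v | v ∉ X ∧ ∀ x ∈ X, ¬ G.Adj x v}

section closedNbhdCompl

variable {G : SimpleGraph V} {X Y : Set V} {u v : V}

lemma closedNbhdCompl_anti (h : X ⊆ Y) : closedNbhdCompl G Y ⊆ closedNbhdCompl G X :=
  fun _ hv => ⟨fun hx => hv.1 (h hx), fun x hx => hv.2 x (h hx)⟩

lemma closedNbhdCompl_union :
    closedNbhdCompl G (X ∪ Y) = closedNbhdCompl G X ∩ closedNbhdCompl G Y := by
  ext v
  simp only [closedNbhdCompl, Set.mem_ofPred_eq, Set.mem_inter_iff, Set.mem_union]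
  grind

@[simp]
lemma mem_closedNbhdCompl_singleton : v ∈ closedNbhdCompl G {u} ↔ v ≠ u ∧ ¬ G.Adj u v := by
  simp [closedNbhdCompl]

lemma exists_adj_of_notMem_closedNbhdCompl (hv : v ∉ closedNbhdCompl G X) (hvX : v ∉ X) :
    ∃ x ∈ X, G.Adj x v := by
  simpa [closedNbhdCompl, hvX] using hv

lemma connected_induce_insert (hX : (G.induce X).Connected) {x : V} (hx : x ∈ X)
    (hxu : G.Adj x u) : (G.induce (insert u X)).Connected := by
  rw [← Set.union_singleton]
  exact connected_induce_union hX.preconnected .of_subsingleton hx rfl hxu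

end closedNbhdCompl

namespace IsInducedPathOn

variable {G : SimpleGraph V} {n : ℕ} {q : Fin n → V}

lemma apply_mem_closedNbhdCompl (hq : IsInducedPathOn G n q) {i j : Fin n}
    (h : i.val + 2 ≤ j.val ∨ j.val + 2 ≤ i.val) : q i ∈ closedNbhdCompl G {q j} := by
  rw [mem_closedNbhdCompl_singleton, hq.2, Ne, hq.1.eq_iff, Fin.ext_iff]
  omega

lemma window (hq : IsInducedPathOn G n q) {k : ℕ} (a : ℕ) (h : k + a ≤ n) :
    IsInducedPathOn G k (fun i : Fin k => q ⟨i + a, by omega⟩) := by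
  refine ⟨fun i j hij => ?_, fun i j => ?_⟩
  · have := congrArg Fin.val (hq.1 hij)
    simp only at this
    exact Fin.ext (by omega)
  · rw [hq.2]
    simp only
    omega

lemma comp_embedding_iff {W : Type*} {G' : SimpleGraph W} (f : G' ↪g G) {p : Fin n → W} :
    IsInducedPathOn G n (f ∘ p) ↔ IsInducedPathOn G' n p := by
  simp only [IsInducedPathOn, Function.comp_apply, f.map_adj_iff, f.injective.of_comp_iff]

end IsInducedPathOn

lemma InInducedCycle.comp_embedding {W : Type*} {G : SimpleGraph V} {G' : SimpleGraph W}
    (f : G' ↪g G) {m : ℕ} {q : Fin m → W} (hq : InInducedCycle G' q) :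
    InInducedCycle G (f ∘ q) := by
  obtain ⟨n, c, ⟨hn, hinj, hadj⟩, hqc⟩ := hq
  refine ⟨n, f ∘ c, ⟨hn, f.injective.comp hinj, fun i j => ?_⟩, ?_⟩
  · simp only [Function.comp_apply, f.map_adj_iff, hadj]
  · rw [Set.range_comp, Set.range_comp]
    exact Set.image_mono hqc

lemma IsAvoidable.inInducedCycle_comp_embedding {W : Type*} {G : SimpleGraph V}
    {G' : SimpleGraph W} (f : G' ↪g G) {k : ℕ} {p : Fin k → W} (hp : IsAvoidable G' p)
    {q : Fin (k + 2) → W} (hq : IsExtension G (f ∘ p) (f ∘ q)) :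
    InInducedCycle G (f ∘ q) :=
  (hp.2 q ⟨(IsInducedPathOn.comp_embedding_iff f).1 hq.1,
    fun i => f.injective (hq.2 i)⟩).comp_embedding f

lemma IsExtension.exists_eq {G : SimpleGraph V} {k : ℕ} {p : Fin k → V} {q : Fin (k + 2) → V}
    (hq : IsExtension G p q) {j : Fin (k + 2)} (h0 : 0 < j.val) (hk : j.val ≤ k) :
    ∃ i, q j = p i :=
  ⟨⟨j - 1, by omega⟩, by
    rw [← hq.2]
    congr 1
    ext
    simp only [Fin.val_succ, Fin.val_castSucc]
    omega⟩

lemma SimpleGraph.Walk.dist_getVert_of_length_eq_dist {G : SimpleGraph V} {u v : V}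
    {w : G.Walk u v} (hw : w.length = G.dist u v) {i : ℕ} (hi : i ≤ w.length) :
    G.dist u (w.getVert i) = i := by
  have := length_eq_dist_of_subwalk hw (w.isSubwalk_take i)
  rwa [Walk.take_length, min_eq_left hi, eq_comm] at this

/-- Along a shortest walk the distance from the start is the index, which rules out repeated
vertices and chords. -/
lemma SimpleGraph.Walk.isInducedPathOn_getVert_s8 {G : SimpleGraph V} {u v : V}
    {w : G.Walk u v} (hw : w.length = G.dist u v) :
    IsInducedPathOn G (w.length + 1) (fun i => w.getVert i) := by
  have hdist (i : Fin (w.length + 1)) : G.dist u (w.getVert i) = i :=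
    w.dist_getVert_of_length_eq_dist hw (by omega)
  refine ⟨fun i j hij => Fin.ext ?_, fun i j => ⟨fun hadj => ?_, ?_⟩⟩ <;> dsimp only at *
  · rw [← hdist i, ← hdist j]
    exact congrArg _ hij
  · have hij : i.val ≠ j.val := fun h => hadj.ne (by rw [h])
    have := hadj.diff_dist_adj (u := u)
    rw [hdist, hdist] at this
    omega
  · rintro (h | h)
    · rw [← h]
      exact w.adj_getVert_succ (by omega)
    · rw [← h]
      exact (w.adj_getVert_succ (by omega)).symm

lemma Nat.add_one_mod_eq_iff {n i j : ℕ} (hi : i < n) (hj : j < n) :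
    (i + 1) % n = j ↔ i + 1 = j ∨ (i + 1 = n ∧ j = 0) := by
  rcases (show i + 1 ≤ n from hi).lt_or_eq with h | h
  · rw [Nat.mod_eq_of_lt h]
    omega
  · rw [h, Nat.mod_self]
    omega

lemma inInducedCycle_of_anticomplete_interiors {G : SimpleGraph V} {a b : ℕ}
    (ha : 2 ≤ a) (hb : 2 ≤ b)
    {p : Fin (a + 1) → V} {r : Fin (b + 1) → V}
    (hp : IsInducedPathOn G (a + 1) p) (hr : IsInducedPathOn G (b + 1) r)
    (hr0 : r 0 = p (Fin.last a)) (hrb : r (Fin.last b) = p 0)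
    (hpr : ∀ i j, 0 < i.val → i.val < a → 0 < j.val → j.val < b →
      p i ≠ r j ∧ ¬ G.Adj (p i) (r j)) :
    InInducedCycle G p := by
  let c : Fin (a + b) → V := fun t =>
    if h : t.val ≤ a then p ⟨t, by omega⟩ else r ⟨t - a, by omega⟩
  have hcp (t : Fin (a + b)) (h : t.val ≤ a) : c t = p ⟨t, by omega⟩ := dif_pos h
  have hcr (t : Fin (a + b)) (h : a ≤ t.val) : c t = r ⟨t - a, by omega⟩ := by
    rcases h.lt_or_eq with h | h
    · exact dif_neg (by omega)
    · rw [hcp t h.ge]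
      convert hr0.symm using 2 <;> ext <;> simp only [Fin.val_zero, Fin.val_last] <;> omega
  have hc0 (t : Fin (a + b)) (h : t.val = 0) : c t = r (Fin.last b) := by
    rw [hcp t (by omega), hrb]
    congr 1
    ext
    exact h
  have key (i j : Fin (a + b)) (hij : i.val ≤ j.val) :
      (c i = c j → i = j) ∧
        (G.Adj (c i) (c j) ↔ i.val + 1 = j.val ∨ (i.val = 0 ∧ j.val + 1 = a + b)) := by
    simp only [Fin.ext_iff]
    by_cases hja : j.val ≤ a
    · rw [hcp i (by omega), hcp j hja, hp.2, hp.1.eq_iff, Fin.ext_iff]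
      simp only
      omega
    by_cases hai : a ≤ i.val
    · rw [hcr i hai, hcr j (by omega), hr.2, hr.1.eq_iff, Fin.ext_iff]
      simp only
      omega
    by_cases hi0 : i.val = 0
    · rw [hc0 i hi0, hcr j (by omega), hr.2, hr.1.eq_iff, Fin.ext_iff]
      simp only [Fin.val_last]
      omega
    rw [hcp i (by omega), hcr j (by omega)]
    obtain ⟨hne, hnadj⟩ := hpr ⟨i, by omega⟩ ⟨j - a, by omega⟩ (by simp only; omega)
      (by simp only; omega) (by simp only; omega) (by simp only; omega)
    exact ⟨fun h => absurd h hne, iff_of_false hnadj (by omega)⟩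
  refine ⟨a + b, c, ⟨by omega, fun i j hij => ?_, fun i j => ?_⟩, ?_⟩
  · rcases le_total i.val j.val with h | h
    · exact (key i j h).1 hij
    · exact ((key j i h).1 hij.symm).symm
  · rw [Nat.add_one_mod_eq_iff i.isLt j.isLt, Nat.add_one_mod_eq_iff j.isLt i.isLt]
    rcases le_total i.val j.val with h | h
    · rw [(key i j h).2]
      omega
    · rw [G.adj_comm, (key j i h).2]
      omega
  · rintro _ ⟨i, rfl⟩
    exact ⟨⟨i, by omega⟩, hcp _ (by simp only; omega)⟩

section Avoidable

variable {G : SimpleGraph V} {X : Set V} {k : ℕ}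

lemma inInducedCycle_through (hX : (G.induce X).Connected) (hk : 1 ≤ k)
    {q : Fin (k + 2) → V} (hq : IsInducedPathOn G (k + 2) q)
    (hmid : ∀ j : Fin (k + 2), 0 < j.val → j.val ≤ k → q j ∈ closedNbhdCompl G X)
    (hxX : ∃ x ∈ X, G.Adj x (q 0)) (hyX : ∃ y ∈ X, G.Adj y (q (Fin.last _))) :
    InInducedCycle G q := by
  obtain ⟨x, hxX, hxx⟩ := hxX
  obtain ⟨y, hyX, hyy⟩ := hyX
  set T := insert (q (Fin.last _)) (insert (q 0) X)
  have hT : (G.induce T).Connected :=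
    connected_induce_insert (connected_induce_insert hX hxX hxx) (Set.mem_insert_of_mem _ hyX) hyy
  obtain ⟨w, hw⟩ := hT.exists_walk_length_eq_dist ⟨q (Fin.last _), Set.mem_insert _ _⟩
    ⟨q 0, Set.mem_insert_of_mem _ (Set.mem_insert _ _)⟩
  have hr := (IsInducedPathOn.comp_embedding_iff (Embedding.induce T)).2
    (w.isInducedPathOn_getVert_s8 hw)
  have hfar : q (Fin.last _) ∈ closedNbhdCompl G {q 0} :=
    hq.apply_mem_closedNbhdCompl (by simp only [Fin.val_zero, Fin.val_last]; omega)
  rw [mem_closedNbhdCompl_singleton] at hfar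
  have hb : 2 ≤ w.length := hw ▸ hT.one_lt_dist_of_ne_of_not_adj
    (fun h => hfar.1 (congrArg Subtype.val h)) (fun h => hfar.2 h.symm)
  refine inInducedCycle_of_anticomplete_interiors (a := k + 1) (by omega) hb hq hr
    (congrArg Subtype.val w.getVert_zero) (congrArg Subtype.val w.getVert_length) ?_
  intro i j hi0 hik hj0 hjb
  have hrX : (w.getVert j : V) ∈ X := by
    have hne_y : (w.getVert j : V) ≠ q (Fin.last _) := fun h => by
      have := congrArg Fin.val
        (@hr.1 j ⟨0, by omega⟩ (h.trans (congrArg Subtype.val w.getVert_zero).symm))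
      simp only at this
      omega
    have hne_x : (w.getVert j : V) ≠ q 0 := fun h => by
      have := congrArg Fin.val
        (@hr.1 j (Fin.last _) (h.trans (congrArg Subtype.val w.getVert_length).symm))
      simp only [Fin.val_last] at this
      omega
    have hmem := (w.getVert j).2
    simp only [T, Set.mem_insert_iff] at hmem
    tauto
  have hqi := hmid i hi0 (by omega)
  exact ⟨fun h => hqi.1 (h ▸ hrX), fun h => hqi.2 _ hrX h.symm⟩

theorem isAvoidable_of_maximal (hk : 1 ≤ k) (hX : (G.induce X).Connected)
    (hmax : ∀ u ∉ X, (∃ x ∈ X, G.Adj x u) →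
      ¬ ∃ p : Fin k → V, IsInducedPathOn G k p ∧ ∀ i, p i ∈ closedNbhdCompl G (insert u X))
    {p : Fin k → closedNbhdCompl G X} (hp : IsAvoidable (G.induce (closedNbhdCompl G X)) p) :
    IsAvoidable G (fun i => (p i : V)) := by
  let f := Embedding.induce (G := G) (closedNbhdCompl G X)
  refine ⟨(IsInducedPathOn.comp_embedding_iff f).2 hp.1, fun q hq => ?_⟩
  have hmid (j : Fin (k + 2)) (h0 : 0 < j.val) (hjk : j.val ≤ k) :
      q j ∈ closedNbhdCompl G X := by
    obtain ⟨i, hi⟩ := hq.exists_eq h0 hjk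
    exact hi ▸ (p i).2
  have hmem (j : Fin (k + 2)) (h0 : j.val = 0 → q 0 ∈ closedNbhdCompl G X)
      (hl : j.val = k + 1 → q (Fin.last _) ∈ closedNbhdCompl G X) :
      q j ∈ closedNbhdCompl G X := by
    rcases Nat.eq_zero_or_pos j.val with hj | hj
    · exact (Fin.ext hj : j = 0) ▸ h0 hj
    rcases Nat.lt_or_ge j.val (k + 1) with hj' | hj'
    · exact hmid j hj (by omega)
    · exact (Fin.ext (by simp only [Fin.val_last]; omega) : j = Fin.last _) ▸ hl (by omega)
  have hxX : q 0 ∉ X := fun h =>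
    (hmid 1 (by simp) (by simp only [Fin.val_one]; omega)).2 _ h ((hq.1.2 0 1).2 (by simp))
  have hyX : q (Fin.last _) ∉ X := fun h =>
    (hmid ⟨k, by omega⟩ (by simp only; omega) le_rfl).2 _ h ((hq.1.2 _ _).2 (by simp)).symm
  -- a window of `k` vertices of `q` far from an end `q e ∈ N(X)` contradicts maximality
  have hwindow (a : ℕ) (ha : a ≤ 2) (e : Fin (k + 2)) (he : e.val + 2 ≤ a ∨ k + 1 + a ≤ e.val)
      (hO : ∀ i : Fin k, q ⟨i + a, by omega⟩ ∈ closedNbhdCompl G X) (heX : q e ∉ X)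
      (heO : q e ∉ closedNbhdCompl G X) : False :=
    hmax _ heX (exists_adj_of_notMem_closedNbhdCompl heO heX)
      ⟨_, hq.1.window a (by omega), fun i => by
        rw [Set.insert_eq, Set.union_comm, closedNbhdCompl_union]
        exact ⟨hO i, hq.1.apply_mem_closedNbhdCompl (by simp only; omega)⟩⟩
  by_cases hx : q 0 ∈ closedNbhdCompl G X <;> by_cases hy : q (Fin.last _) ∈ closedNbhdCompl G X
  · exact hp.inInducedCycle_comp_embedding f
      (q := fun j => ⟨q j, hmem j (fun _ => hx) (fun _ => hy)⟩) hq
  · exact (hwindow 0 (by omega) (Fin.last _) (by simp) (fun i => hmem _ (fun _ => hx)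
      (fun h => absurd h (by simp only; omega))) hyX hy).elim
  · exact (hwindow 2 le_rfl 0 (by simp) (fun i => hmem _ (fun h => absurd h (by simp only; omega))
      (fun _ => hy)) hxX hx).elim
  · exact inInducedCycle_through hX hk hq.1 hmid
      (exists_adj_of_notMem_closedNbhdCompl hx hxX) (exists_adj_of_notMem_closedNbhdCompl hy hyX)

end Avoidable

theorem exists_isAvoidable_of_connected [Finite V] {G : SimpleGraph V} {k : ℕ} (hk : 1 ≤ k)
    (hsub : ∀ X : Set V, X.Nonempty → ∀ p : Fin k → closedNbhdCompl G X,
      IsInducedPathOn (G.induce (closedNbhdCompl G X)) k p →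
      ∃ p' : Fin k → closedNbhdCompl G X, IsAvoidable (G.induce (closedNbhdCompl G X)) p')
    {X : Set V} (hX : (G.induce X).Connected) {p : Fin k → V} (hp : IsInducedPathOn G k p)
    (hpX : ∀ i, p i ∈ closedNbhdCompl G X) :
    ∃ p : Fin k → V, (∀ i, p i ∈ closedNbhdCompl G X) ∧ IsAvoidable G p := by
  induction hn : Xᶜ.ncard using Nat.strong_induction_on generalizing X p with
  | _ n ih =>
  by_cases hgrow : ∃ u ∉ X, ∃ x ∈ X, G.Adj x u ∧
      ∃ p : Fin k → V, IsInducedPathOn G k p ∧ ∀ i, p i ∈ closedNbhdCompl G (insert u X)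
  · obtain ⟨u, hu, x, hx, hxu, p', hp', hp'X⟩ := hgrow
    have hlt : (insert u X)ᶜ.ncard < n :=
      hn ▸ Set.ncard_lt_ncard (compl_lt_compl_iff_lt.2 (Set.ssubset_insert hu))
    obtain ⟨q, hqX, hq⟩ := ih _ hlt (connected_induce_insert hX hx hxu) hp' hp'X rfl
    exact ⟨q, fun i => closedNbhdCompl_anti (Set.subset_insert u X) (hqX i), hq⟩
  · obtain ⟨p', hp'⟩ := hsub X (Set.nonempty_coe_sort.1 hX.nonempty) (fun i => ⟨p i, hpX i⟩)
      ((IsInducedPathOn.comp_embedding_iff (Embedding.induce _)).1 hp)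
    refine ⟨_, fun i => (p' i).2, isAvoidable_of_maximal hk hX ?_ hp'⟩
    rintro u hu ⟨x, hx, hxu⟩ hpath
    exact hgrow ⟨u, hu, x, hx, hxu, hpath⟩

theorem exists_isAvoidable [Finite V] {G : SimpleGraph V} {k : ℕ} (hk : 1 ≤ k)
    {p : Fin k → V} (hp : IsInducedPathOn G k p) : ∃ p : Fin k → V, IsAvoidable G p := by
  induction hn : Nat.card V using Nat.strong_induction_on generalizing V with
  | _ n ih =>
  by_cases hfar : ∃ v, ∃ p : Fin k → V, IsInducedPathOn G k p ∧ ∀ i, p i ∈ closedNbhdCompl G {v}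
  · obtain ⟨v, p', hp', hp'v⟩ := hfar
    have hsub (X : Set V) (hX : X.Nonempty) (p : Fin k → closedNbhdCompl G X)
        (hp : IsInducedPathOn (G.induce (closedNbhdCompl G X)) k p) :
        ∃ p', IsAvoidable (G.induce (closedNbhdCompl G X)) p' :=
      ih _ (hn ▸ Finite.card_subtype_lt (x := hX.some) fun h => h.1 hX.some_mem) hp rfl
    obtain ⟨q, -, hq⟩ := exists_isAvoidable_of_connected hk hsub
      (Connected.of_subsingleton (G := G.induce {v})) hp' hp'v
    exact ⟨q, hq⟩
  · refine ⟨p, hp, fun q hq => (hfar ⟨q (Fin.last _), _, hq.1.window 0 (by omega),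
      fun i => hq.1.apply_mem_closedNbhdCompl (by simp)⟩).elim⟩

/-- If `G[X]` is connected, then either `G − N[X]` has no induced `P_k`, or some induced
`P_k` inside `G − N[X]` is avoidable in `G`. -/
theorem stmt8 [Fintype V] (k : ℕ) (hk : 1 ≤ k) (G : SimpleGraph V) (X : Set V)
    (hX : (G.induce X).Connected) :
    (¬ ∃ p : Fin k → V, IsInducedPathOn G k p ∧
        ∀ i, p i ∉ X ∧ ∀ x ∈ X, ¬ G.Adj x (p i)) ∨
    (∃ p : Fin k → V, IsInducedPathOn G k p ∧
        (∀ i, p i ∉ X ∧ ∀ x ∈ X, ¬ G.Adj x (p i)) ∧ IsAvoidable G p) := by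
  refine or_iff_not_imp_left.2 fun hpath => ?_
  obtain ⟨p, hp, hpX⟩ := not_not.1 hpath
  obtain ⟨q, hqX, hq⟩ := exists_isAvoidable_of_connected hk
    (fun _ _ _ hp => exists_isAvoidable hk hp) hX hp hpX
  exact ⟨q, hq.1, hqX, hq⟩
end

section
/- Let G be a graph, u₁u₂ an edge of G, and G' the graph obtained by merging u₁ and u₂ into a vertex u. If C is an induced cycle of G' passing through u, then there is an induced cycle of G containing all vertices of C except u (replacing u by u₁, by u₂, or by the edge u₁u₂). -/
variable {V : Type*}

/-! Rotate `C` so that the merged vertex comes first. The other vertices of `C` form an induced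
path `P` of `G` whose only vertices adjacent to `u₁` or `u₂` are its two ends. If `u₁` or `u₂`
is adjacent to both ends, that vertex closes `P` into an induced cycle of `G`. Otherwise `u₁`
is adjacent to exactly one end and `u₂` to exactly the other, and the edge `u₁u₂` closes the
path `u₁ P u₂`. -/

theorem Nat.add_one_mod_eq_iff_s15 {a b n : ℕ} (ha : a < n) (hb : b < n) :
    (a + 1) % n = b ↔ a + 1 = b ∨ a + 1 = n ∧ b = 0 := by
  rcases (Nat.succ_le_of_lt ha).eq_or_lt with h | h
  · rw [← h, Nat.mod_self]; omega
  · rw [Nat.mod_eq_of_lt h]; omega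

theorem Fin.val_add_one_mod_eq_iff {n : ℕ} [NeZero n] (i j : Fin n) :
    ((i : ℕ) + 1) % n = j ↔ i + 1 = j := by
  rw [Fin.ext_iff, Fin.val_add, Fin.val_one', Nat.add_mod_mod]

section

variable {G : SimpleGraph V}

theorem isInducedPathOn_cons_iff {k : ℕ} {x : V} {p : Fin (k + 1) → V} :
    IsInducedPathOn G (k + 2) (Fin.cons x p) ↔
      IsInducedPathOn G (k + 1) p ∧ x ∉ Set.range p ∧ ∀ i, G.Adj x (p i) ↔ i = 0 := by
  simp only [IsInducedPathOn, Fin.cons_injective_iff, Fin.forall_fin_succ (n := k + 1),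
    Fin.cons_zero, Fin.cons_succ, Fin.val_zero, Fin.val_succ, SimpleGraph.irrefl, G.adj_comm _ x,
    Fin.ext_iff, forall_and]
  constructor
  · rintro ⟨⟨hx, hinj⟩, ⟨-, hxp⟩, -, hpp⟩
    exact ⟨⟨hinj, fun i j => (hpp i j).trans (by omega)⟩, hx, fun i => (hxp i).trans (by omega)⟩
  · rintro ⟨⟨hinj, hpp⟩, hx, hxp⟩
    exact ⟨⟨hx, hinj⟩, ⟨by simp, fun i => (hxp i).trans (by omega)⟩,
      fun i => (hxp i).trans (by omega), fun i j => (hpp i j).trans (by omega)⟩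

theorem isInducedCycleOn_cons_iff {k : ℕ} {x : V} {p : Fin (k + 2) → V} :
    IsInducedCycleOn G (k + 3) (Fin.cons x p) ↔
      IsInducedPathOn G (k + 2) p ∧ x ∉ Set.range p ∧
        ∀ i, G.Adj x (p i) ↔ i = 0 ∨ i = Fin.last (k + 1) := by
  have key : ∀ i j : Fin (k + 3), ((i : ℕ) + 1) % (k + 3) = j ↔
      (i : ℕ) + 1 = j ∨ (i : ℕ) + 1 = k + 3 ∧ (j : ℕ) = 0 :=
    fun i j => Nat.add_one_mod_eq_iff_s15 i.2 j.2
  simp only [IsInducedCycleOn, IsInducedPathOn, key, Fin.cons_injective_iff,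
    Fin.forall_fin_succ (n := k + 2), Fin.cons_zero, Fin.cons_succ, Fin.val_zero, Fin.val_succ,
    SimpleGraph.irrefl, G.adj_comm _ x, Fin.ext_iff, Fin.val_last, forall_and, and_true]
  constructor
  · rintro ⟨-, ⟨hx, hinj⟩, ⟨-, hxp⟩, -, hpp⟩
    exact ⟨⟨hinj, fun i j => (hpp i j).trans (by omega)⟩, hx, fun i => (hxp i).trans (by omega)⟩
  · rintro ⟨⟨hinj, hpp⟩, hx, hxp⟩
    exact ⟨by omega, ⟨hx, hinj⟩, ⟨by simp, fun i => (hxp i).trans (by omega)⟩,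
      fun i => (hxp i).trans (by omega), fun i j => (hpp i j).trans (by omega)⟩

theorem IsInducedCycleOn.rotate {n : ℕ} {c : Fin n → V} (hc : IsInducedCycleOn G n c)
    (s : Fin n) : IsInducedCycleOn G n (fun i => c (s + i)) := by
  obtain ⟨hn, hinj, hadj⟩ := hc
  have : NeZero n := ⟨by omega⟩
  refine ⟨hn, fun i j h => add_left_cancel (hinj h), fun i j => ?_⟩
  simp only [hadj, Fin.val_add_one_mod_eq_iff, add_assoc, add_right_inj]

theorem IsInducedCycleOn.exists_adj {n : ℕ} {c : Fin n → V} (hc : IsInducedCycleOn G n c)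
    (i : Fin n) : ∃ j, G.Adj (c i) (c j) := by
  have : NeZero n := ⟨by have := hc.1; omega⟩
  exact ⟨i + 1, (hc.2.2 _ _).2 (Or.inl ((Fin.val_add_one_mod_eq_iff _ _).2 rfl))⟩

theorem IsInducedPathOn.isInducedCycleOn_cons_cons {k : ℕ} {p : Fin (k + 2) → V} {x y : V}
    (hp : IsInducedPathOn G (k + 2) p) (hx : x ∉ Set.range p) (hy : y ∉ Set.range p)
    (hxy : G.Adj x y) (hxp : ∀ i, G.Adj x (p i) ↔ i = 0)
    (hyp : ∀ i, G.Adj y (p i) ↔ i = Fin.last (k + 1)) :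
    IsInducedCycleOn G (k + 4) (Fin.cons y (Fin.cons x p)) := by
  refine isInducedCycleOn_cons_iff.2 ⟨isInducedPathOn_cons_iff.2 ⟨hp, hx, hxp⟩, ?_, ?_⟩
  · simpa [hxy.ne'] using hy
  · refine Fin.cases (by simpa using hxy.symm) fun i => ?_
    simpa [Fin.succ_ne_zero, ← Fin.succ_last] using hyp i

theorem IsInducedPathOn.exists_isInducedCycleOn_of_adj_ends {k : ℕ} {p : Fin (k + 2) → V}
    {x y : V} (hp : IsInducedPathOn G (k + 2) p) (hx : x ∉ Set.range p) (hy : y ∉ Set.range p)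
    (hxy : G.Adj x y)
    (hends : ∀ i, G.Adj x (p i) ∨ G.Adj y (p i) ↔ i = 0 ∨ i = Fin.last (k + 1)) :
    ∃ (m : ℕ) (d : Fin m → V), IsInducedCycleOn G m d ∧ Set.range p ⊆ Set.range d := by
  have hxe : ∀ i, G.Adj x (p i) → i = 0 ∨ i = Fin.last (k + 1) := fun i h => (hends i).1 (.inl h)
  have hye : ∀ i, G.Adj y (p i) → i = 0 ∨ i = Fin.last (k + 1) := fun i h => (hends i).1 (.inr h)
  have h0 := (hends 0).2 (.inl rfl)
  have hl := (hends (Fin.last _)).2 (.inr rfl)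
  have closeWith : ∀ z, z ∉ Set.range p → (∀ i, G.Adj z (p i) → i = 0 ∨ i = Fin.last (k + 1)) →
      G.Adj z (p 0) → G.Adj z (p (Fin.last _)) →
      ∃ (m : ℕ) (d : Fin m → V), IsInducedCycleOn G m d ∧ Set.range p ⊆ Set.range d :=
    fun z hz hze hz0 hzl => ⟨_, _, isInducedCycleOn_cons_iff.2
      ⟨hp, hz, fun i => ⟨hze i, by rintro (rfl | rfl) <;> assumption⟩⟩, by simp⟩
  have hsub : ∀ x y, Set.range p ⊆ Set.range (Fin.cons y (Fin.cons x p) : Fin (k + 4) → V) :=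
    fun x y => by
      rw [Fin.range_cons, Fin.range_cons]
      exact (Set.subset_insert _ _).trans (Set.subset_insert _ _)
  have adj_iff_eq : ∀ z a b, (∀ i, G.Adj z (p i) → i = a ∨ i = b) → G.Adj z (p a) →
      ¬ G.Adj z (p b) → ∀ i, G.Adj z (p i) ↔ i = a :=
    fun z a b hz ha hb i => ⟨fun h => (hz i h).resolve_right (by rintro rfl; exact hb h),
      by rintro rfl; exact ha⟩
  by_cases hx0 : G.Adj x (p 0) <;> by_cases hxl : G.Adj x (p (Fin.last _))
  · exact closeWith x hx hxe hx0 hxl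
  · have hyl := hl.resolve_left hxl
    by_cases hy0 : G.Adj y (p 0)
    · exact closeWith y hy hye hy0 hyl
    · exact ⟨_, _, hp.isInducedCycleOn_cons_cons hx hy hxy (adj_iff_eq x _ _ hxe hx0 hxl)
        (adj_iff_eq y _ _ (fun i h => (hye i h).symm) hyl hy0), hsub x y⟩
  · have hy0 := h0.resolve_left hx0
    by_cases hyl : G.Adj y (p (Fin.last _))
    · exact closeWith y hy hye hy0 hyl
    · exact ⟨_, _, hp.isInducedCycleOn_cons_cons hy hx hxy.symm (adj_iff_eq y _ _ hye hy0 hyl)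
        (adj_iff_eq x _ _ (fun i h => (hxe i h).symm) hxl hx0), hsub y x⟩
  · exact closeWith y hy hye (h0.resolve_left hx0) (hl.resolve_left hxl)

theorem mergeGraph_adj_iff_of_ne {u₁ u₂ a b : V} (ha₁ : a ≠ u₁) (hb₁ : b ≠ u₁) (ha₂ : a ≠ u₂)
    (hb₂ : b ≠ u₂) : (mergeGraph G u₁ u₂).Adj a b ↔ G.Adj a b := by
  simp only [mergeGraph, ha₁, hb₁, false_and, or_false]
  exact ⟨fun h => h.2.2.2, fun h => ⟨h.ne, ha₂, hb₂, h⟩⟩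

theorem mergeGraph_adj_left_iff {u₁ u₂ b : V} (h : u₁ ≠ u₂) (hb₁ : b ≠ u₁) (hb₂ : b ≠ u₂) :
    (mergeGraph G u₁ u₂).Adj u₁ b ↔ G.Adj u₁ b ∨ G.Adj u₂ b := by
  simp [mergeGraph, h, hb₁, hb₁.symm, hb₂]

theorem IsInducedCycleOn.exists_isInducedCycleOn_of_mergeGraph {u₁ u₂ : V} {k : ℕ}
    {c : Fin (k + 3) → V} (h : G.Adj u₁ u₂)
    (hc : IsInducedCycleOn (mergeGraph G u₁ u₂) (k + 3) c) (h0 : c 0 = u₁) :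
    ∃ (m : ℕ) (d : Fin m → V), IsInducedCycleOn G m d ∧ Set.range (Fin.tail c) ⊆ Set.range d := by
  have hc₂ : u₂ ∉ Set.range c := by
    rintro ⟨i, hi⟩
    obtain ⟨j, hj⟩ := hc.exists_adj i
    exact hj.2.1 hi
  rw [← Fin.cons_self_tail c, h0, isInducedCycleOn_cons_iff] at hc
  obtain ⟨⟨hinj, hpp⟩, hu₁, hends⟩ := hc
  have hu₂ : u₂ ∉ Set.range (Fin.tail c) := fun ⟨i, hi⟩ => hc₂ ⟨i.succ, hi⟩
  have hne₁ : ∀ i, Fin.tail c i ≠ u₁ := fun i hi => hu₁ ⟨i, hi⟩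
  have hne₂ : ∀ i, Fin.tail c i ≠ u₂ := fun i hi => hu₂ ⟨i, hi⟩
  refine IsInducedPathOn.exists_isInducedCycleOn_of_adj_ends ⟨hinj, fun i j => ?_⟩ hu₁ hu₂ h
    fun i => ?_
  · rw [← mergeGraph_adj_iff_of_ne (hne₁ i) (hne₁ j) (hne₂ i) (hne₂ j), hpp]
  · rw [← mergeGraph_adj_left_iff h.ne (hne₁ i) (hne₂ i), hends]

end

/-- If `C` is an induced cycle through the merged vertex `u` (represented by `u₁`) of
`G' = mergeGraph G u₁ u₂`, then `G` has an induced cycle containing all vertices of `C`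
except `u`. -/
theorem stmt15 (G : SimpleGraph V) (u₁ u₂ : V) (h : G.Adj u₁ u₂)
    (n : ℕ) (c : Fin n → V) (hc : IsInducedCycleOn (mergeGraph G u₁ u₂) n c)
    (hu : ∃ i, c i = u₁) :
    ∃ (m : ℕ) (d : Fin m → V), IsInducedCycleOn G m d ∧
      ∀ i : Fin n, c i ≠ u₁ → c i ∈ Set.range d := by
  obtain ⟨i₀, hi₀⟩ := hu
  obtain ⟨k, rfl⟩ : ∃ k, n = k + 3 := ⟨n - 3, by have := hc.1; omega⟩
  obtain ⟨m, d, hd, hsub⟩ :=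
    (hc.rotate i₀).exists_isInducedCycleOn_of_mergeGraph h (by simpa using hi₀)
  refine ⟨m, d, hd, fun i hi => hsub ?_⟩
  have hmem : c i ∈ Set.range fun j => c (i₀ + j) := ⟨i - i₀, by simp⟩
  rw [Fin.range_fin_succ] at hmem
  simpa [hi₀, hi] using hmem
end
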